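/- arXiv:1304.0737 — 2 statements merged into one kernel-verified Lean document; each statement's English description precedes it below -/
import Mathlib

section
/- Let 𝔡 be a quadratic Lie algebra and let 𝔠₁, 𝔠₂ ⊆ 𝔡 be coisotropic Lie subalgebras such that 𝔠₁ ∩ 𝔠₂ is also a coisotropic subalgebra. Then: (a) 𝔠₁⊥ ⊆ (𝔠₁ ∩ 𝔠₂)⊥ ⊆ 𝔠₁ ∩ 𝔠₂ ⊆ 𝔠₂; (b) 𝔠_{2,1} := ((𝔠₁ ∩ 𝔠₂) + 𝔠₁⊥)/𝔠₁⊥ is a coisotropic Lie subalgebra of the reduced quadratic Lie algebra 𝔡_{𝔠₁} = 𝔠₁/𝔠₁⊥ whose orthogonal complement in 𝔡_{𝔠₁} equals (𝔠₁⊥ + 𝔠₂⊥)/𝔠₁⊥; (c) the assignment x ↦ ((x + 𝔠₁⊥) + (𝔠_{2,1})⊥) induces an isomorphism of quadratic Lie algebras from (𝔠₁ ∩ 𝔠₂)/(𝔠₁ ∩ 𝔠₂)⊥ onto 𝔠_{2,1}/(𝔠_{2,1})⊥, preserving both the Lie brackets and the induced bilinear forms. In other words, reducing 𝔡 by 𝔠₁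 and then reducing the result by 𝔠_{2,1} agrees with reducing 𝔡 by 𝔠₁ ∩ 𝔠₂. -/
/-!
Since `𝔠₁⊥ ⊆ (𝔠₁ ∩ 𝔠₂)⊥ ⊆ 𝔠₁ ∩ 𝔠₂`, the subspace `(𝔠₁ ∩ 𝔠₂) + 𝔠₁⊥` is just `𝔠₁ ∩ 𝔠₂`.
As the form on `𝔠₁/𝔠₁⊥` is induced from `B`, a class `x + 𝔠₁⊥` is orthogonal to `𝔠_{2,1}`
exactly when `x ⊥ 𝔠₁ ∩ 𝔠₂`. In finite dimension `(𝔠₁ ∩ 𝔠₂)⊥ = 𝔠₁⊥ + 𝔠₂⊥` by nondegeneracy,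
which describes `𝔠_{2,1}⊥`; the same criterion identifies the kernel of
`𝔠₁ ∩ 𝔠₂ → 𝔠_{2,1}/𝔠_{2,1}⊥` with `(𝔠₁ ∩ 𝔠₂)⊥`. Finally, invariance of `B` makes the
orthogonal of a subalgebra an ideal of it, so the bracket descends to the quotient.
-/

variable {D : Type*} [LieRing D] [LieAlgebra ℝ D]

/-- The orthogonal complement of `𝔠`, regarded as a submodule of `𝔠`. -/
noncomputable def perpIn (B : LinearMap.BilinForm ℝ D) (c : LieSubalgebra ℝ D) :
    Submodule ℝ c.toSubmodule :=
  (B.orthogonal c.toSubmodule).comap c.toSubmodule.subtype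

/-- The reduction `𝔡_𝔠 = 𝔠/𝔠⊥` of `𝔡` by a coisotropic subalgebra `𝔠`. -/
noncomputable abbrev Reduction (B : LinearMap.BilinForm ℝ D) (c : LieSubalgebra ℝ D) :=
  c.toSubmodule ⧸ perpIn B c

/-- `𝔠_{2,1} = ((𝔠₁ ∩ 𝔠₂) + 𝔠₁⊥)/𝔠₁⊥`, as a submodule of the reduction `𝔡_{𝔠₁}`. -/
noncomputable def cTwoOne (B : LinearMap.BilinForm ℝ D) (c₁ c₂ : LieSubalgebra ℝ D) :
    Submodule ℝ (Reduction B c₁) :=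
  Submodule.map (perpIn B c₁).mkQ
    ((c₁.toSubmodule ⊓ c₂.toSubmodule).comap c₁.toSubmodule.subtype)

/-- The second reduction `(𝔡_{𝔠₁})_{𝔠_{2,1}} = 𝔠_{2,1}/(𝔠_{2,1})⊥`, where `B₁` is the form
induced on `𝔡_{𝔠₁}`. -/
noncomputable abbrev SecondReduction (B : LinearMap.BilinForm ℝ D)
    (c₁ c₂ : LieSubalgebra ℝ D) (B₁ : LinearMap.BilinForm ℝ (Reduction B c₁)) :=
  cTwoOne B c₁ c₂ ⧸ (B₁.orthogonal (cTwoOne B c₁ c₂)).comap (cTwoOne B c₁ c₂).subtype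

/-- The canonical map `𝔠₁ ∩ 𝔠₂ → (𝔡_{𝔠₁})_{𝔠_{2,1}}`,
`x ↦ ((x + 𝔠₁⊥) + (𝔠_{2,1})⊥)`. -/
noncomputable def doubleRed (B : LinearMap.BilinForm ℝ D) (c₁ c₂ : LieSubalgebra ℝ D)
    (B₁ : LinearMap.BilinForm ℝ (Reduction B c₁)) :
    (c₁.toSubmodule ⊓ c₂.toSubmodule : Submodule ℝ D) →ₗ[ℝ]
      SecondReduction B c₁ c₂ B₁ :=
  ((B₁.orthogonal (cTwoOne B c₁ c₂)).comap (cTwoOne B c₁ c₂).subtype).mkQ.comp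
    (LinearMap.codRestrict (cTwoOne B c₁ c₂)
      ((perpIn B c₁).mkQ.comp (Submodule.inclusion inf_le_left))
      (fun x => Submodule.mem_map_of_mem (by exact x.2)))

namespace LinearMap.BilinForm

theorem orthogonal_sup {R M : Type*} [CommRing R] [AddCommGroup M] [Module R M]
    (B : LinearMap.BilinForm R M) (N L : Submodule R M) :
    B.orthogonal (N ⊔ L) = B.orthogonal N ⊓ B.orthogonal L := by
  refine le_antisymm (le_inf (B.orthogonal_le le_sup_left) (B.orthogonal_le le_sup_right)) ?_
  rintro x ⟨hxN, hxL⟩ n hn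
  obtain ⟨a, ha, b, hb, rfl⟩ := Submodule.mem_sup.mp hn
  show B (a + b) x = 0
  rw [map_add, LinearMap.add_apply, hxN a ha, hxL b hb, add_zero]

theorem orthogonal_inf {K V : Type*} [Field K] [AddCommGroup V] [Module K V]
    [FiniteDimensional K V] {B : LinearMap.BilinForm K V} (hB : B.Nondegenerate) (hB₀ : B.IsRefl)
    (N L : Submodule K V) :
    B.orthogonal (N ⊓ L) = B.orthogonal N ⊔ B.orthogonal L := by
  conv_lhs => rw [← B.orthogonal_orthogonal hB hB₀ N, ← B.orthogonal_orthogonal hB hB₀ L,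
    ← orthogonal_sup, B.orthogonal_orthogonal hB hB₀]

end LinearMap.BilinForm

section Invariant

variable {R L : Type*} [CommRing R] [LieRing L] [LieAlgebra R L] {B : LinearMap.BilinForm R L}

theorem LieSubalgebra.lie_mem_orthogonal (hB₀ : B.IsRefl)
    (hinv : ∀ x y z : L, B ⁅x, y⁆ z + B y ⁅x, z⁆ = 0) (S : LieSubalgebra R L) {x p : L}
    (hx : x ∈ S) (hp : p ∈ B.orthogonal S.toSubmodule) :
    ⁅x, p⁆ ∈ B.orthogonal S.toSubmodule := by
  intro n hn
  have hpn : B p ⁅x, n⁆ = 0 := hB₀ _ _ (hp _ (S.lie_mem hx hn))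
  refine hB₀ _ _ ?_
  linear_combination hinv x p n - hpn

theorem LieSubalgebra.lie_sub_lie_mem_orthogonal (hB₀ : B.IsRefl)
    (hinv : ∀ x y z : L, B ⁅x, y⁆ z + B y ⁅x, z⁆ = 0) (S : LieSubalgebra R L) {x x' y y' : L}
    (hx' : x' ∈ S) (hy : y ∈ S) (hdx : x - x' ∈ B.orthogonal S.toSubmodule)
    (hdy : y - y' ∈ B.orthogonal S.toSubmodule) :
    ⁅x, y⁆ - ⁅x', y'⁆ ∈ B.orthogonal S.toSubmodule := by
  have hsplit : ⁅x, y⁆ - ⁅x', y'⁆ = ⁅x - x', y⁆ + ⁅x', y - y'⁆ := by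
    rw [sub_lie, lie_sub]; abel
  rw [hsplit, ← lie_skew (x - x') y]
  exact add_mem (neg_mem (S.lie_mem_orthogonal hB₀ hinv hy hdx))
    (S.lie_mem_orthogonal hB₀ hinv hx' hdy)

end Invariant

section InducedForm

variable {B : LinearMap.BilinForm ℝ D} {c : LieSubalgebra ℝ D}
  {B₁ : LinearMap.BilinForm ℝ (Reduction B c)}

theorem mkQ_mem_orthogonal_map_iff
    (hB₁ : ∀ x y : c.toSubmodule,
      B₁ (Submodule.Quotient.mk x) (Submodule.Quotient.mk y) = B (x : D) (y : D))
    {N : Submodule ℝ D} (hN : N ≤ c.toSubmodule) (w : c.toSubmodule) :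
    (perpIn B c).mkQ w ∈
        B₁.orthogonal ((N.comap c.toSubmodule.subtype).map (perpIn B c).mkQ) ↔
      (w : D) ∈ B.orthogonal N := by
  constructor
  · intro hw n hn
    exact (hB₁ ⟨n, hN hn⟩ w).symm.trans (hw _ ⟨⟨n, hN hn⟩, hn, rfl⟩)
  · rintro hw _ ⟨x, hx, rfl⟩
    exact (hB₁ x w).trans (hw _ hx)

theorem orthogonal_map_mkQ
    (hB₁ : ∀ x y : c.toSubmodule,
      B₁ (Submodule.Quotient.mk x) (Submodule.Quotient.mk y) = B (x : D) (y : D))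
    {N : Submodule ℝ D} (hN : N ≤ c.toSubmodule) :
    B₁.orthogonal ((N.comap c.toSubmodule.subtype).map (perpIn B c).mkQ) =
      ((B.orthogonal N).comap c.toSubmodule.subtype).map (perpIn B c).mkQ := by
  ext v
  constructor
  · intro hv
    obtain ⟨w, rfl⟩ := Submodule.mkQ_surjective _ v
    exact ⟨w, (mkQ_mem_orthogonal_map_iff hB₁ hN w).mp hv, rfl⟩
  · rintro ⟨w, hw, rfl⟩
    exact (mkQ_mem_orthogonal_map_iff hB₁ hN w).mpr hw

end InducedForm

section DoubleReduction

variable {B : LinearMap.BilinForm ℝ D} {c₁ c₂ : LieSubalgebra ℝ D}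
  {B₁ : LinearMap.BilinForm ℝ (Reduction B c₁)}

theorem orthogonal_cTwoOne
    (hB₁ : ∀ x y : c₁.toSubmodule,
      B₁ (Submodule.Quotient.mk x) (Submodule.Quotient.mk y) = B (x : D) (y : D)) :
    B₁.orthogonal (cTwoOne B c₁ c₂) =
      ((B.orthogonal (c₁.toSubmodule ⊓ c₂.toSubmodule)).comap c₁.toSubmodule.subtype).map
        (perpIn B c₁).mkQ :=
  orthogonal_map_mkQ hB₁ inf_le_left

theorem ker_doubleRed
    (hB₁ : ∀ x y : c₁.toSubmodule,
      B₁ (Submodule.Quotient.mk x) (Submodule.Quotient.mk y) = B (x : D) (y : D)) :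
    LinearMap.ker (doubleRed B c₁ c₂ B₁) =
      (B.orthogonal (c₁.toSubmodule ⊓ c₂.toSubmodule)).comap
        (c₁.toSubmodule ⊓ c₂.toSubmodule).subtype := by
  ext x
  simp only [LinearMap.mem_ker, doubleRed, LinearMap.coe_comp, Function.comp_apply,
    Submodule.mkQ_apply, Submodule.Quotient.mk_eq_zero, Submodule.mem_comap]
  exact mkQ_mem_orthogonal_map_iff hB₁ inf_le_left _

theorem doubleRed_surjective : Function.Surjective (doubleRed B c₁ c₂ B₁) := by
  rintro ⟨u⟩
  obtain ⟨x, hx, hxu⟩ := u.2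
  exact ⟨⟨x, hx⟩, congrArg Submodule.Quotient.mk (Subtype.ext hxu)⟩

theorem apply_doubleRed_doubleRed
    (hB₁ : ∀ x y : c₁.toSubmodule,
      B₁ (Submodule.Quotient.mk x) (Submodule.Quotient.mk y) = B (x : D) (y : D))
    {B₂ : LinearMap.BilinForm ℝ (SecondReduction B c₁ c₂ B₁)}
    (hB₂ : ∀ u v : cTwoOne B c₁ c₂,
      B₂ (Submodule.Quotient.mk u) (Submodule.Quotient.mk v) = B₁ (u : Reduction B c₁) v)
    (x y : (c₁.toSubmodule ⊓ c₂.toSubmodule : Submodule ℝ D)) :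
    B₂ (doubleRed B c₁ c₂ B₁ x) (doubleRed B c₁ c₂ B₁ y) = B (x : D) (y : D) :=
  (hB₂ _ _).trans (hB₁ _ _)

end DoubleReduction

theorem commutativity_of_reductions_general
    [FiniteDimensional ℝ D]
    (B : LinearMap.BilinForm ℝ D) (hsymm : B.IsSymm) (hnondeg : B.Nondegenerate)
    (hinv : ∀ x y z : D, B ⁅x, y⁆ z + B y ⁅x, z⁆ = 0)
    (c₁ c₂ : LieSubalgebra ℝ D)
    (hc₁₂ : B.orthogonal (c₁.toSubmodule ⊓ c₂.toSubmodule)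
      ≤ c₁.toSubmodule ⊓ c₂.toSubmodule)
    -- the bilinear form induced on `𝔡_{𝔠₁}` :
    (B₁ : LinearMap.BilinForm ℝ (Reduction B c₁))
    (hB₁ : ∀ x y : c₁.toSubmodule,
      B₁ (Submodule.Quotient.mk x) (Submodule.Quotient.mk y) = B (x : D) (y : D))
    -- the bilinear form induced on the second reduction `𝔠_{2,1}/(𝔠_{2,1})⊥` :
    (B₂ : LinearMap.BilinForm ℝ (SecondReduction B c₁ c₂ B₁))
    (hB₂ : ∀ u v : cTwoOne B c₁ c₂,
      B₂ (Submodule.Quotient.mk u) (Submodule.Quotient.mk v) = B₁ (u : Reduction B c₁) v) :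
    -- (a) the chain of inclusions:
    (B.orthogonal c₁.toSubmodule ≤ B.orthogonal (c₁.toSubmodule ⊓ c₂.toSubmodule) ∧
      B.orthogonal (c₁.toSubmodule ⊓ c₂.toSubmodule) ≤ c₁.toSubmodule ⊓ c₂.toSubmodule ∧
      c₁.toSubmodule ⊓ c₂.toSubmodule ≤ c₂.toSubmodule) ∧
    -- (b) `(𝔠₁ ∩ 𝔠₂) + 𝔠₁⊥` is closed under the bracket (so `𝔠_{2,1}` is a Lie subalgebra
    -- of the reduced Lie algebra `𝔡_{𝔠₁}`),
    ((∀ x ∈ (c₁.toSubmodule ⊓ c₂.toSubmodule) ⊔ B.orthogonal c₁.toSubmodule,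
        ∀ y ∈ (c₁.toSubmodule ⊓ c₂.toSubmodule) ⊔ B.orthogonal c₁.toSubmodule,
          ⁅x, y⁆ ∈ (c₁.toSubmodule ⊓ c₂.toSubmodule) ⊔ B.orthogonal c₁.toSubmodule) ∧
      -- `𝔠_{2,1}` is coisotropic in `𝔡_{𝔠₁}`, with orthogonal `(𝔠₁⊥ + 𝔠₂⊥)/𝔠₁⊥`:
      B₁.orthogonal (cTwoOne B c₁ c₂) ≤ cTwoOne B c₁ c₂ ∧
      B₁.orthogonal (cTwoOne B c₁ c₂)
        = Submodule.map (perpIn B c₁).mkQ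
            ((B.orthogonal c₁.toSubmodule ⊔ B.orthogonal c₂.toSubmodule).comap
              c₁.toSubmodule.subtype)) ∧
    -- (c) `x ↦ ((x + 𝔠₁⊥) + (𝔠_{2,1})⊥)` induces an isomorphism of quadratic Lie algebras
    -- `(𝔠₁ ∩ 𝔠₂)/(𝔠₁ ∩ 𝔠₂)⊥ ≅ 𝔠_{2,1}/(𝔠_{2,1})⊥`: it is surjective, its kernel is
    -- `(𝔠₁ ∩ 𝔠₂)⊥`, it intertwines the forms, and the bracket descends along it:
    (Function.Surjective (doubleRed B c₁ c₂ B₁) ∧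
      LinearMap.ker (doubleRed B c₁ c₂ B₁)
        = (B.orthogonal (c₁.toSubmodule ⊓ c₂.toSubmodule)).comap
            (c₁.toSubmodule ⊓ c₂.toSubmodule).subtype ∧
      (∀ x y : (c₁.toSubmodule ⊓ c₂.toSubmodule : Submodule ℝ D),
        B₂ (doubleRed B c₁ c₂ B₁ x) (doubleRed B c₁ c₂ B₁ y) = B (x : D) (y : D)) ∧
      (∀ x y x' y' : (c₁.toSubmodule ⊓ c₂.toSubmodule : Submodule ℝ D),
        doubleRed B c₁ c₂ B₁ x = doubleRed B c₁ c₂ B₁ x' →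
        doubleRed B c₁ c₂ B₁ y = doubleRed B c₁ c₂ B₁ y' →
        doubleRed B c₁ c₂ B₁
            ⟨⁅(x : D), (y : D)⁆, Submodule.mem_inf.mpr
              ⟨c₁.lie_mem (Submodule.mem_inf.mp x.2).1 (Submodule.mem_inf.mp y.2).1,
               c₂.lie_mem (Submodule.mem_inf.mp x.2).2 (Submodule.mem_inf.mp y.2).2⟩⟩
          = doubleRed B c₁ c₂ B₁
            ⟨⁅(x' : D), (y' : D)⁆, Submodule.mem_inf.mpr
              ⟨c₁.lie_mem (Submodule.mem_inf.mp x'.2).1 (Submodule.mem_inf.mp y'.2).1,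
               c₂.lie_mem (Submodule.mem_inf.mp x'.2).2 (Submodule.mem_inf.mp y'.2).2⟩⟩)) := by
  have hB₀ : B.IsRefl := hsymm.isRefl
  have hperp₁ : B.orthogonal c₁.toSubmodule ≤ B.orthogonal (c₁.toSubmodule ⊓ c₂.toSubmodule) :=
    B.orthogonal_le inf_le_left
  refine ⟨⟨hperp₁, hc₁₂, inf_le_right⟩, ⟨?_, ?_, ?_⟩, doubleRed_surjective, ker_doubleRed hB₁,
    apply_doubleRed_doubleRed hB₁ hB₂, ?_⟩
  · rw [sup_eq_left.mpr (hperp₁.trans hc₁₂)]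
    exact fun x hx y hy => (c₁ ⊓ c₂).lie_mem hx hy
  · rw [orthogonal_cTwoOne hB₁]
    exact Submodule.map_mono (Submodule.comap_mono hc₁₂)
  · rw [orthogonal_cTwoOne hB₁, B.orthogonal_inf hnondeg hB₀]
  · intro x y x' y' hx hy
    rw [← LinearMap.sub_mem_ker_iff, ker_doubleRed hB₁] at hx hy ⊢
    exact (c₁ ⊓ c₂).lie_sub_lie_mem_orthogonal hB₀ hinv x'.2 y.2 hx hy

/-- Let `𝔠₁, 𝔠₂` be coisotropic Lie subalgebras of a quadratic Lie algebra `𝔡`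
such that `𝔠₁ ∩ 𝔠₂` is coisotropic, and let `B₁` be the form induced on `𝔡_{𝔠₁} = 𝔠₁/𝔠₁⊥`
and `B₂` the form induced on `(𝔡_{𝔠₁})_{𝔠_{2,1}} = 𝔠_{2,1}/(𝔠_{2,1})⊥`.  Then:
(a) `𝔠₁⊥ ⊆ (𝔠₁ ∩ 𝔠₂)⊥ ⊆ 𝔠₁ ∩ 𝔠₂ ⊆ 𝔠₂`;
(b) `𝔠_{2,1} = ((𝔠₁ ∩ 𝔠₂) + 𝔠₁⊥)/𝔠₁⊥` is a coisotropic Lie subalgebra of `𝔡_{𝔠₁}` whose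
orthogonal complement equals `(𝔠₁⊥ + 𝔠₂⊥)/𝔠₁⊥`;
(c) `x ↦ ((x + 𝔠₁⊥) + (𝔠_{2,1})⊥)` induces an isomorphism of quadratic Lie algebras
`(𝔠₁ ∩ 𝔠₂)/(𝔠₁ ∩ 𝔠₂)⊥ ≅ 𝔠_{2,1}/(𝔠_{2,1})⊥`, preserving the brackets and the forms. -/
theorem commutativity_of_reductions
    [FiniteDimensional ℝ D]
    (B : LinearMap.BilinForm ℝ D) (hsymm : B.IsSymm) (hnondeg : B.Nondegenerate)
    (hinv : ∀ x y z : D, B ⁅x, y⁆ z + B y ⁅x, z⁆ = 0)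
    (c₁ c₂ : LieSubalgebra ℝ D)
    (hc₁ : B.orthogonal c₁.toSubmodule ≤ c₁.toSubmodule)
    (hc₂ : B.orthogonal c₂.toSubmodule ≤ c₂.toSubmodule)
    (hc₁₂ : B.orthogonal (c₁.toSubmodule ⊓ c₂.toSubmodule)
      ≤ c₁.toSubmodule ⊓ c₂.toSubmodule)
    -- the bilinear form induced on `𝔡_{𝔠₁}` :
    (B₁ : LinearMap.BilinForm ℝ (Reduction B c₁))
    (hB₁ : ∀ x y : c₁.toSubmodule,
      B₁ (Submodule.Quotient.mk x) (Submodule.Quotient.mk y) = B (x : D) (y : D))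
    -- the bilinear form induced on the second reduction `𝔠_{2,1}/(𝔠_{2,1})⊥` :
    (B₂ : LinearMap.BilinForm ℝ (SecondReduction B c₁ c₂ B₁))
    (hB₂ : ∀ u v : cTwoOne B c₁ c₂,
      B₂ (Submodule.Quotient.mk u) (Submodule.Quotient.mk v) = B₁ (u : Reduction B c₁) v) :
    -- (a) the chain of inclusions:
    (B.orthogonal c₁.toSubmodule ≤ B.orthogonal (c₁.toSubmodule ⊓ c₂.toSubmodule) ∧
      B.orthogonal (c₁.toSubmodule ⊓ c₂.toSubmodule) ≤ c₁.toSubmodule ⊓ c₂.toSubmodule ∧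
      c₁.toSubmodule ⊓ c₂.toSubmodule ≤ c₂.toSubmodule) ∧
    -- (b) `(𝔠₁ ∩ 𝔠₂) + 𝔠₁⊥` is closed under the bracket (so `𝔠_{2,1}` is a Lie subalgebra
    -- of the reduced Lie algebra `𝔡_{𝔠₁}`),
    ((∀ x ∈ (c₁.toSubmodule ⊓ c₂.toSubmodule) ⊔ B.orthogonal c₁.toSubmodule,
        ∀ y ∈ (c₁.toSubmodule ⊓ c₂.toSubmodule) ⊔ B.orthogonal c₁.toSubmodule,
          ⁅x, y⁆ ∈ (c₁.toSubmodule ⊓ c₂.toSubmodule) ⊔ B.orthogonal c₁.toSubmodule) ∧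
      -- `𝔠_{2,1}` is coisotropic in `𝔡_{𝔠₁}`, with orthogonal `(𝔠₁⊥ + 𝔠₂⊥)/𝔠₁⊥`:
      B₁.orthogonal (cTwoOne B c₁ c₂) ≤ cTwoOne B c₁ c₂ ∧
      B₁.orthogonal (cTwoOne B c₁ c₂)
        = Submodule.map (perpIn B c₁).mkQ
            ((B.orthogonal c₁.toSubmodule ⊔ B.orthogonal c₂.toSubmodule).comap
              c₁.toSubmodule.subtype)) ∧
    -- (c) `x ↦ ((x + 𝔠₁⊥) + (𝔠_{2,1})⊥)` induces an isomorphism of quadratic Lie algebras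
    -- `(𝔠₁ ∩ 𝔠₂)/(𝔠₁ ∩ 𝔠₂)⊥ ≅ 𝔠_{2,1}/(𝔠_{2,1})⊥`: it is surjective, its kernel is
    -- `(𝔠₁ ∩ 𝔠₂)⊥`, it intertwines the forms, and the bracket descends along it:
    (Function.Surjective (doubleRed B c₁ c₂ B₁) ∧
      LinearMap.ker (doubleRed B c₁ c₂ B₁)
        = (B.orthogonal (c₁.toSubmodule ⊓ c₂.toSubmodule)).comap
            (c₁.toSubmodule ⊓ c₂.toSubmodule).subtype ∧
      (∀ x y : (c₁.toSubmodule ⊓ c₂.toSubmodule : Submodule ℝ D),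
        B₂ (doubleRed B c₁ c₂ B₁ x) (doubleRed B c₁ c₂ B₁ y) = B (x : D) (y : D)) ∧
      (∀ x y x' y' : (c₁.toSubmodule ⊓ c₂.toSubmodule : Submodule ℝ D),
        doubleRed B c₁ c₂ B₁ x = doubleRed B c₁ c₂ B₁ x' →
        doubleRed B c₁ c₂ B₁ y = doubleRed B c₁ c₂ B₁ y' →
        doubleRed B c₁ c₂ B₁
            ⟨⁅(x : D), (y : D)⁆, Submodule.mem_inf.mpr
              ⟨c₁.lie_mem (Submodule.mem_inf.mp x.2).1 (Submodule.mem_inf.mp y.2).1,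
               c₂.lie_mem (Submodule.mem_inf.mp x.2).2 (Submodule.mem_inf.mp y.2).2⟩⟩
          = doubleRed B c₁ c₂ B₁
            ⟨⁅(x' : D), (y' : D)⁆, Submodule.mem_inf.mpr
              ⟨c₁.lie_mem (Submodule.mem_inf.mp x'.2).1 (Submodule.mem_inf.mp y'.2).1,
               c₂.lie_mem (Submodule.mem_inf.mp x'.2).2 (Submodule.mem_inf.mp y'.2).2⟩⟩)) :=
  commutativity_of_reductions_general B hsymm hnondeg hinv c₁ c₂ hc₁₂ B₁ hB₁ B₂ hB₂
end

section
/- Let 𝔤 be a quadratic Lie algebra, let E and V be finite sets, and let in, out : E → V be bijections (so that (E, V, in, out) is a permutation graph Γ). Then the twisted diagonal 𝔤_Γ := { e ↦ (ξ_{in(e)}, ξ_{out(e)}) : ξ ∈ 𝔤^V } is a Lagrangian Lie subalgebra of the product quadratic Lie algebra (𝔤̄⊕𝔤)^E: it is a Lie subalgebra and it equals its own orthogonal complement with respect to the form ⟨z, z′⟩ = Σ_{e∈E} ( −⟨x_e, x′_e⟩ + ⟨y_e, y′_e⟩ ), where z_e = (x_e, y_e). -/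
section PiProdLie
variable {L M : Type*} [LieRing L] [LieRing M]

instance prodBracket : Bracket (L × M) (L × M) :=
  ⟨fun x y => (⁅x.1, y.1⁆, ⁅x.2, y.2⁆)⟩

instance prodLieRing : LieRing (L × M) where
  add_lie x y z := Prod.ext (add_lie x.1 y.1 z.1) (add_lie x.2 y.2 z.2)
  lie_add x y z := Prod.ext (lie_add x.1 y.1 z.1) (lie_add x.2 y.2 z.2)
  lie_self x := Prod.ext (lie_self x.1) (lie_self x.2)
  leibniz_lie x y z := Prod.ext (leibniz_lie x.1 y.1 z.1) (leibniz_lie x.2 y.2 z.2)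

instance prodLieAlgebra {R : Type*} [CommRing R] [LieAlgebra R L] [LieAlgebra R M] :
    LieAlgebra R (L × M) where
  lie_smul t x y := Prod.ext (lie_smul t x.1 y.1) (lie_smul t x.2 y.2)

variable {ι : Type*} {F : ι → Type*} [∀ i, LieRing (F i)]

instance piBracket : Bracket (∀ i, F i) (∀ i, F i) :=
  ⟨fun x y i => ⁅x i, y i⁆⟩

instance piLieRing : LieRing (∀ i, F i) where
  add_lie x y z := funext fun i => add_lie (x i) (y i) (z i)
  lie_add x y z := funext fun i => lie_add (x i) (y i) (z i)
  lie_self x := funext fun i => lie_self (x i)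
  leibniz_lie x y z := funext fun i => leibniz_lie (x i) (y i) (z i)

instance piLieAlgebra {R : Type*} [CommRing R] [∀ i, LieAlgebra R (F i)] :
    LieAlgebra R (∀ i, F i) where
  lie_smul t x y := funext fun i => lie_smul t (x i) (y i)

end PiProdLie

/-- The bilinear form of `𝔤̄ ⊕ 𝔤`: `⟨(x,y),(x′,y′)⟩ = −⟨x,x′⟩ + ⟨y,y′⟩`. -/
noncomputable def barSumForm {g : Type*} [AddCommGroup g] [Module ℝ g]
    (B : LinearMap.BilinForm ℝ g) : LinearMap.BilinForm ℝ (g × g) :=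
  B.compl₁₂ (LinearMap.snd ℝ g g) (LinearMap.snd ℝ g g)
    - B.compl₁₂ (LinearMap.fst ℝ g g) (LinearMap.fst ℝ g g)

/-- The bilinear form of `(𝔤̄ ⊕ 𝔤)^E`: the sum over `E` of the forms of `𝔤̄ ⊕ 𝔤`. -/
noncomputable def piBarSumForm {g : Type*} [AddCommGroup g] [Module ℝ g]
    (E : Type*) [Fintype E] (B : LinearMap.BilinForm ℝ g) :
    LinearMap.BilinForm ℝ (E → g × g) :=
  ∑ e : E, (barSumForm B).compl₁₂
    (LinearMap.proj (R := ℝ) (φ := fun _ : E => g × g) e)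
    (LinearMap.proj (R := ℝ) (φ := fun _ : E => g × g) e)

/-- The twisted diagonal `𝔤_Γ = { e ↦ (ξ (in e), ξ (out e)) : ξ ∈ 𝔤^V } ⊆ (𝔤̄ ⊕ 𝔤)^E`. -/
noncomputable def twistedDiagonal {g : Type*} [AddCommGroup g] [Module ℝ g]
    {E V : Type*} (inn out : E → V) : Submodule ℝ (E → g × g) :=
  LinearMap.range (LinearMap.pi fun e =>
    (LinearMap.proj (R := ℝ) (φ := fun _ : V => g) (inn e)).prod
      (LinearMap.proj (R := ℝ) (φ := fun _ : V => g) (out e)))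

/-! Reindexing the two halves of the sum by `in` and `out`, the pairing of `(ξ ∘ in, ξ ∘ out) ∈ 𝔤_Γ`
with any `z = (x, y)` becomes `∑ v, ⟨ξ v, y (out⁻¹ v) - x (in⁻¹ v)⟩`. The twisted diagonal is exactly
the set of `z` whose defect `v ↦ y (out⁻¹ v) - x (in⁻¹ v)` vanishes, and since `ξ` is arbitrary,
nondegeneracy of `⟨·,·⟩` makes the orthogonal complement of `𝔤_Γ` that same set. -/

theorem mem_twistedDiagonal_iff {g : Type*} [AddCommGroup g] [Module ℝ g] {E V : Type*}
    {inn out : E → V} {z : E → g × g} :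
    z ∈ twistedDiagonal (g := g) inn out ↔ ∃ ξ : V → g, ∀ e, z e = (ξ (inn e), ξ (out e)) :=
  ⟨fun ⟨ξ, hξ⟩ => ⟨ξ, fun e => (congrFun hξ e).symm⟩,
    fun ⟨ξ, hξ⟩ => ⟨ξ, funext fun e => (hξ e).symm⟩⟩

theorem lie_mem_twistedDiagonal {g : Type*} [LieRing g] [Module ℝ g] {E V : Type*}
    {inn out : E → V} {z w : E → g × g} (hz : z ∈ twistedDiagonal (g := g) inn out)
    (hw : w ∈ twistedDiagonal (g := g) inn out) : ⁅z, w⁆ ∈ twistedDiagonal (g := g) inn out := by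
  obtain ⟨ξ, hξ⟩ := mem_twistedDiagonal_iff.mp hz
  obtain ⟨η, hη⟩ := mem_twistedDiagonal_iff.mp hw
  refine mem_twistedDiagonal_iff.mpr ⟨fun v => ⁅ξ v, η v⁆, fun e => ?_⟩
  change (⁅(z e).1, (w e).1⁆, ⁅(z e).2, (w e).2⁆) = _
  rw [hξ e, hη e]

section Lagrangian

variable {g : Type*} [AddCommGroup g] [Module ℝ g] {E V : Type*}

def twistedDefect (inn out : E ≃ V) (z : E → g × g) (v : V) : g :=
  (z (out.symm v)).2 - (z (inn.symm v)).1

theorem mem_twistedDiagonal_iff_twistedDefect_eq_zero {inn out : E ≃ V} {z : E → g × g} :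
    z ∈ twistedDiagonal (g := g) inn out ↔ twistedDefect inn out z = 0 := by
  rw [mem_twistedDiagonal_iff]
  constructor
  · rintro ⟨ξ, hξ⟩
    funext v
    simp [twistedDefect, hξ]
  · intro h
    refine ⟨fun v => (z (inn.symm v)).1, fun e => ?_⟩
    have hout : (z e).2 = (z (inn.symm (out e))).1 := by
      simpa [twistedDefect, sub_eq_zero] using congrFun h (out e)
    simp [← hout]

variable [Fintype E] [Fintype V]

theorem piBarSumForm_apply (B : LinearMap.BilinForm ℝ g) (z w : E → g × g) :
    piBarSumForm E B z w = ∑ e, (B (z e).2 (w e).2 - B (z e).1 (w e).1) := by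
  simp [piBarSumForm, barSumForm, LinearMap.sum_apply]

theorem eq_zero_of_forall_sum_apply_eq_zero {B : LinearMap.BilinForm ℝ g}
    (hB : B.SeparatingRight) {η : V → g} (h : ∀ ξ : V → g, ∑ v, B (ξ v) (η v) = 0) : η = 0 := by
  classical
  funext v
  refine hB _ fun u => ?_
  have := h (Pi.single v u)
  rwa [Fintype.sum_eq_single v fun w hw => by rw [Pi.single_eq_of_ne hw, map_zero,
    LinearMap.zero_apply], Pi.single_eq_same] at this

theorem piBarSumForm_twistedDiagonal_apply (B : LinearMap.BilinForm ℝ g) (inn out : E ≃ V)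
    (ξ : V → g) (z : E → g × g) :
    piBarSumForm E B (fun e => (ξ (inn e), ξ (out e))) z =
      ∑ v, B (ξ v) (twistedDefect inn out z v) := by
  simp only [piBarSumForm_apply, twistedDefect, map_sub, Finset.sum_sub_distrib]
  rw [← out.sum_comp, ← inn.sum_comp]
  simp

theorem orthogonal_twistedDiagonal {B : LinearMap.BilinForm ℝ g} (hB : B.SeparatingRight)
    (inn out : E ≃ V) :
    (piBarSumForm E B).orthogonal (twistedDiagonal inn out) = twistedDiagonal inn out := by
  ext z
  rw [LinearMap.BilinForm.mem_orthogonal_iff, mem_twistedDiagonal_iff_twistedDefect_eq_zero]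
  constructor
  · intro hz
    refine eq_zero_of_forall_sum_apply_eq_zero hB fun ξ => ?_
    rw [← piBarSumForm_twistedDiagonal_apply]
    exact hz _ (mem_twistedDiagonal_iff.mpr ⟨ξ, fun _ => rfl⟩)
  · intro hz w hw
    obtain ⟨ξ, hξ⟩ := mem_twistedDiagonal_iff.mp hw
    rw [funext hξ, piBarSumForm_twistedDiagonal_apply, hz]
    simp

end Lagrangian

theorem twistedDiagonal_lagrangian_general
    {g : Type*} [LieRing g] [LieAlgebra ℝ g]
    (B : LinearMap.BilinForm ℝ g) (hnondeg : B.Nondegenerate)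
    {E V : Type*} [Fintype E] [Fintype V]
    (inn out : E → V) (hin : Function.Bijective inn) (hout : Function.Bijective out) :
    -- `𝔤_Γ` is a Lie subalgebra (closed under the componentwise bracket),
    (∀ z ∈ twistedDiagonal (g := g) inn out, ∀ w ∈ twistedDiagonal (g := g) inn out,
        ⁅z, w⁆ ∈ twistedDiagonal (g := g) inn out) ∧
    -- and it is Lagrangian.
    (piBarSumForm E B).orthogonal (twistedDiagonal inn out)
      = twistedDiagonal inn out :=
  ⟨fun _ hz _ hw => lie_mem_twistedDiagonal hz hw,
    orthogonal_twistedDiagonal hnondeg.2 (.ofBijective inn hin) (.ofBijective out hout)⟩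

/-- For a quadratic Lie algebra `𝔤` and a permutation graph `Γ = (E, V, in, out)`
(with `in`, `out` bijections), the twisted diagonal `𝔤_Γ` is a Lagrangian Lie subalgebra of
the product quadratic Lie algebra `(𝔤̄ ⊕ 𝔤)^E`. -/
theorem twistedDiagonal_lagrangian
    {g : Type*} [LieRing g] [LieAlgebra ℝ g] [FiniteDimensional ℝ g]
    (B : LinearMap.BilinForm ℝ g) (hsymm : B.IsSymm) (hnondeg : B.Nondegenerate)
    (hinv : ∀ x y z : g, B ⁅x, y⁆ z + B y ⁅x, z⁆ = 0)
    {E V : Type*} [Fintype E] [Fintype V]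
    (inn out : E → V) (hin : Function.Bijective inn) (hout : Function.Bijective out) :
    -- `𝔤_Γ` is a Lie subalgebra (closed under the componentwise bracket),
    (∀ z ∈ twistedDiagonal (g := g) inn out, ∀ w ∈ twistedDiagonal (g := g) inn out,
        ⁅z, w⁆ ∈ twistedDiagonal (g := g) inn out) ∧
    -- and it is Lagrangian.
    (piBarSumForm E B).orthogonal (twistedDiagonal inn out)
      = twistedDiagonal inn out :=
  twistedDiagonal_lagrangian_general B hnondeg inn out hin hout
end
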